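/- arXiv:1904.10437 — 5 statements merged into one kernel-verified Lean document; each statement's English description precedes it below -/
import Mathlib

section
/- For a Hermitian matrix X and a positive definite matrix σ on a finite-dimensional Hilbert space, and any α ≥ 1, the trace norm of X satisfies ‖X‖₁ ≤ ‖σ^{(1-α)/(2α)} X σ^{(1-α)/(2α)}‖_α · (Tr σ)^{(α-1)/α}, where ‖·‖_p denotes the Schatten p-norm. -/
/-!
With `S = σ^{(α-1)/(2α)}` and `Y = S⁻¹ X S⁻¹` we have `X = S Y S`. Splitting `Y = Y⁺ - Y⁻` writes
`X` as the difference of the positive matrices `S Y⁺ S` and `S Y⁻ S`, so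
`‖X‖₁ ≤ Tr (S |Y| S) = Tr (σ^{(α-1)/α} |Y|)`. Hölder's inequality for the trace with exponents
`α/(α-1)` and `α` bounds this by `(Tr σ)^{(α-1)/α} ‖Y‖_α`.

The trace Hölder inequality reduces to the scalar one: in eigenbases of `A` and `B`,
`Tr (A B) = ∑ aᵢ bⱼ |Wᵢⱼ|²` for a unitary `W`, and `(|Wᵢⱼ|²)` is doubly stochastic.
-/

open scoped Classical
open Matrix ComplexOrder

noncomputable section

variable {n : Type*} [Fintype n] [DecidableEq n]

/-- Real power of a (Hermitian) matrix via the continuous functional calculus. -/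
noncomputable def mpow (A : Matrix n n ℂ) (r : ℝ) : Matrix n n ℂ :=
  cfc (fun x : ℝ => x ^ r) A

/-- Schatten `p`-norm `(Tr[(Y†Y)^(p/2)])^(1/p)`. -/
noncomputable def schattenNorm (p : ℝ) (Y : Matrix n n ℂ) : ℝ :=
  ((mpow (Yᴴ * Y) (p / 2)).trace).re ^ (1 / p)

/-- `μ_α(X‖σ) = ‖σ^{(1-α)/(2α)} X σ^{(1-α)/(2α)}‖_α`. -/
noncomputable def muAlpha (α : ℝ) (X σ : Matrix n n ℂ) : ℝ :=
  schattenNorm α (mpow σ ((1 - α) / (2 * α)) * X * mpow σ ((1 - α) / (2 * α)))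

open scoped MatrixOrder

theorem inner_le_Lp_mul_Lq_of_mem_doublyStochastic {w : Matrix n n ℝ}
    (hw : w ∈ doublyStochastic ℝ n) (a b : n → ℝ) {p q : ℝ} (hpq : p.HolderConjugate q) :
    ∑ i, ∑ j, a i * b j * w i j ≤ (∑ i, |a i| ^ p) ^ (1 / p) * (∑ j, |b j| ^ q) ^ (1 / q) := by
  obtain ⟨hw0, hrow, hcol⟩ := mem_doublyStochastic_iff_sum.mp hw
  have hsplit (i j : n) :
      a i * b j * w i j = (w i j ^ (1 / p) * a i) * (w i j ^ (1 / q) * b j) := by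
    have h : 1 / p + 1 / q = 1 := by simpa only [one_div] using hpq.inv_add_inv_eq_one
    rw [mul_mul_mul_comm, ← Real.rpow_add' (hw0 i j) (by rw [h]; exact one_ne_zero), h,
      Real.rpow_one]
    ring
  have hpow {r : ℝ} (hr : r ≠ 0) (x : ℝ) (i j : n) :
      |w i j ^ (1 / r) * x| ^ r = w i j * |x| ^ r := by
    rw [abs_mul, abs_of_nonneg (Real.rpow_nonneg (hw0 i j) _),
      Real.mul_rpow (Real.rpow_nonneg (hw0 i j) _) (abs_nonneg x), one_div,
      Real.rpow_inv_rpow (hw0 i j) hr]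
  calc ∑ i, ∑ j, a i * b j * w i j
      = ∑ ij : n × n, (w ij.1 ij.2 ^ (1 / p) * a ij.1) * (w ij.1 ij.2 ^ (1 / q) * b ij.2) := by
        rw [Fintype.sum_prod_type]
        simp only [hsplit]
    _ ≤ (∑ ij : n × n, |w ij.1 ij.2 ^ (1 / p) * a ij.1| ^ p) ^ (1 / p) *
          (∑ ij : n × n, |w ij.1 ij.2 ^ (1 / q) * b ij.2| ^ q) ^ (1 / q) :=
        Real.inner_le_Lp_mul_Lq _ _ _ hpq
    _ = (∑ i, |a i| ^ p) ^ (1 / p) * (∑ j, |b j| ^ q) ^ (1 / q) := by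
        rw [Fintype.sum_prod_type, Fintype.sum_prod_type_right]
        simp only [hpow hpq.ne_zero, hpow hpq.symm.ne_zero, ← Finset.sum_mul, hrow, hcol, one_mul]

namespace Matrix

lemma continuousOn_spectrum_real (A : Matrix n n ℂ) (f : ℝ → ℝ) :
    ContinuousOn f (spectrum ℝ A) :=
  finite_real_spectrum.continuousOn f

lemma posSemidef_cfc (A : Matrix n n ℂ) {f : ℝ → ℝ} (hf : ∀ x ∈ spectrum ℝ A, 0 ≤ f x) :
    (cfc f A).PosSemidef :=
  nonneg_iff_posSemidef.mp (cfc_nonneg hf)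

lemma IsHermitian.re_trace_cfc {A : Matrix n n ℂ} (hA : A.IsHermitian) (f : ℝ → ℝ) :
    (cfc f A).trace.re = ∑ i, f (hA.eigenvalues i) := by
  rw [hA.cfc_eq, IsHermitian.cfc, Unitary.conjStarAlgAut_apply, trace_mul_cycle,
    Unitary.coe_star_mul_self, Matrix.one_mul, trace_diagonal]
  simp

lemma PosSemidef.re_trace_mul_nonneg {A B : Matrix n n ℂ} (hA : A.PosSemidef)
    (hB : B.PosSemidef) : 0 ≤ (A * B).trace.re := by
  have hRBR := hB.conjTranspose_mul_mul_same (CFC.sqrt A)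
  rw [(CFC.sqrt_nonneg A).posSemidef.isHermitian.eq] at hRBR
  rw [← CFC.sqrt_mul_sqrt_self A hA.nonneg, Matrix.mul_assoc, trace_mul_comm]
  exact (Complex.nonneg_iff.mp hRBR.trace_nonneg).1

/-- Pair both sides with `F = sgn X`, which satisfies `-1 ≤ F ≤ 1` and `F X = |X|`. -/
lemma IsHermitian.re_trace_cfc_abs_le {X P Q : Matrix n n ℂ} (hX : X.IsHermitian)
    (hP : P.PosSemidef) (hQ : Q.PosSemidef) (hXPQ : X = P - Q) :
    (cfc (fun x : ℝ => |x|) X).trace.re ≤ P.trace.re + Q.trace.re := by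
  set F := cfc (fun x : ℝ => (SignType.sign x : ℝ)) X
  have hsign (x : ℝ) : |(SignType.sign x : ℝ)| ≤ 1 := by
    rcases lt_trichotomy x 0 with h | h | h <;> simp [h]
  have hFX : cfc (fun x : ℝ => |x|) X = F * X := by
    rw [← cfc_id' ℝ X, ← cfc_mul _ _ X (continuousOn_spectrum_real X _)
      (continuousOn_spectrum_real X _), cfc_id' ℝ X]
    exact cfc_congr fun x _ => (sign_mul_self x).symm
  have hF₁ : (1 - F).PosSemidef := by
    rw [← cfc_const_one ℝ X, ← cfc_sub _ _ X (continuousOn_spectrum_real X _)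
      (continuousOn_spectrum_real X _)]
    exact posSemidef_cfc X fun x _ => sub_nonneg.mpr (abs_le.mp (hsign x)).2
  have hF₂ : (1 + F).PosSemidef := by
    rw [← cfc_const_one ℝ X, ← cfc_add X _ _ (continuousOn_spectrum_real X _)
      (continuousOn_spectrum_real X _)]
    exact posSemidef_cfc X fun x _ => neg_le_iff_add_nonneg'.mp (abs_le.mp (hsign x)).1
  have hP' := hF₁.re_trace_mul_nonneg hP
  have hQ' := hF₂.re_trace_mul_nonneg hQ
  rw [hFX, hXPQ]
  simp only [Matrix.sub_mul, Matrix.add_mul, Matrix.mul_sub, Matrix.one_mul, trace_sub, trace_add,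
    Complex.sub_re, Complex.add_re] at hP' hQ' ⊢
  linarith

lemma IsHermitian.re_trace_cfc_abs_conj_le {Y : Matrix n n ℂ} (hY : Y.IsHermitian)
    (S : Matrix n n ℂ) :
    (cfc (fun x : ℝ => |x|) (Sᴴ * Y * S)).trace.re ≤
      (Sᴴ * cfc (fun x : ℝ => |x|) Y * S).trace.re := by
  set Yp := cfc (fun x : ℝ => x⁺) Y
  set Ym := cfc (fun x : ℝ => x⁻) Y
  have hsub : Y = Yp - Ym := by
    rw [← cfc_sub _ _ Y (continuousOn_spectrum_real Y _) (continuousOn_spectrum_real Y _)]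
    conv_lhs => rw [← cfc_id' ℝ Y]
    exact cfc_congr fun x _ => (posPart_sub_negPart x).symm
  have hadd : cfc (fun x : ℝ => |x|) Y = Yp + Ym := by
    rw [← cfc_add Y _ _ (continuousOn_spectrum_real Y _) (continuousOn_spectrum_real Y _)]
    exact cfc_congr fun x _ => (posPart_add_negPart x).symm
  calc (cfc (fun x : ℝ => |x|) (Sᴴ * Y * S)).trace.re
      ≤ (Sᴴ * Yp * S).trace.re + (Sᴴ * Ym * S).trace.re :=
        (isHermitian_conjTranspose_mul_mul S hY).re_trace_cfc_abs_le
          ((posSemidef_cfc Y fun x _ => posPart_nonneg x).conjTranspose_mul_mul_same S)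
          ((posSemidef_cfc Y fun x _ => negPart_nonneg x).conjTranspose_mul_mul_same S)
          (by rw [hsub, Matrix.mul_sub, Matrix.sub_mul])
    _ = (Sᴴ * cfc (fun x : ℝ => |x|) Y * S).trace.re := by
        rw [hadd, Matrix.mul_add, Matrix.add_mul, trace_add, Complex.add_re]

lemma normSq_mem_doublyStochastic {W : Matrix n n ℂ} (hW : W ∈ unitaryGroup n ℂ) :
    of (fun i j => Complex.normSq (W i j)) ∈ doublyStochastic ℝ n := by
  have hrow (i : n) : ∑ j, Complex.normSq (W i j) = 1 := by
    have := congr_fun₂ (mem_unitaryGroup_iff.mp hW) i i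
    simp only [mul_apply, star_apply, one_apply_eq, RCLike.star_def, Complex.mul_conj] at this
    exact_mod_cast congrArg Complex.re this
  have hcol (j : n) : ∑ i, Complex.normSq (W i j) = 1 := by
    have := congr_fun₂ (mem_unitaryGroup_iff'.mp hW) j j
    simp only [mul_apply, star_apply, one_apply_eq, RCLike.star_def,
      ← Complex.normSq_eq_conj_mul_self] at this
    exact_mod_cast congrArg Complex.re this
  exact mem_doublyStochastic_iff_sum.mpr ⟨fun i j => Complex.normSq_nonneg (W i j), hrow, hcol⟩

lemma IsHermitian.re_trace_mul_eq_sum {A B : Matrix n n ℂ} (hA : A.IsHermitian)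
    (hB : B.IsHermitian) :
    (A * B).trace.re = ∑ i, ∑ j, hA.eigenvalues i * hB.eigenvalues j *
      Complex.normSq
        ((star (hA.eigenvectorUnitary : Matrix n n ℂ) * hB.eigenvectorUnitary) i j) := by
  set W := star (hA.eigenvectorUnitary : Matrix n n ℂ) * hB.eigenvectorUnitary
  have hAB : (A * B).trace = (diagonal (RCLike.ofReal ∘ hA.eigenvalues) * W *
      diagonal (RCLike.ofReal ∘ hB.eigenvalues) * star W).trace := by
    conv_lhs => rw [hA.spectral_theorem, hB.spectral_theorem]
    simp only [Unitary.conjStarAlgAut_apply, W, star_mul, star_star, Matrix.mul_assoc]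
    rw [trace_mul_comm]
    simp only [Matrix.mul_assoc]
  rw [hAB, trace, Complex.re_sum]
  refine Finset.sum_congr rfl fun i _ => ?_
  rw [diag_apply, mul_apply, Complex.re_sum]
  refine Finset.sum_congr rfl fun j _ => ?_
  simp only [mul_diagonal, diagonal_mul, star_apply, Function.comp_apply, RCLike.star_def]
  rw [mul_right_comm _ (W i j), mul_assoc, Complex.mul_conj]
  simp

end Matrix

lemma mpow_zero {A : Matrix n n ℂ} (hA : A.IsHermitian) : mpow A 0 = 1 := by
  simp only [mpow, Real.rpow_zero]
  exact cfc_const_one ℝ A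

lemma mpow_one {A : Matrix n n ℂ} (hA : A.IsHermitian) : mpow A 1 = A := by
  simp only [mpow, Real.rpow_one]
  exact cfc_id' ℝ A

lemma posSemidef_mpow {A : Matrix n n ℂ} (hA : A.PosSemidef) (r : ℝ) : (mpow A r).PosSemidef :=
  posSemidef_cfc A fun _ hx => Real.rpow_nonneg (spectrum_nonneg_of_nonneg hA.nonneg hx) r

lemma mpow_mul_mpow {A : Matrix n n ℂ} (hA : A.PosDef) (r s : ℝ) :
    mpow A r * mpow A s = mpow A (r + s) := by
  rw [mpow, mpow, ← cfc_mul _ _ A (continuousOn_spectrum_real A _)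
    (continuousOn_spectrum_real A _)]
  exact cfc_congr fun x hx =>
    (Real.rpow_add ((isStrictlyPositive_iff_posDef.mpr hA).spectrum_pos hx) r s).symm

lemma mpow_mpow {A : Matrix n n ℂ} (hA : A.PosSemidef) (r s : ℝ) :
    mpow (mpow A r) s = mpow A (r * s) := by
  rw [mpow, mpow, mpow, ← cfc_comp' _ _ A ((finite_real_spectrum.image _).continuousOn _)
    (continuousOn_spectrum_real A _)]
  exact cfc_congr fun x hx =>
    (Real.rpow_mul (spectrum_nonneg_of_nonneg hA.nonneg hx) r s).symm

lemma mpow_cfc_abs {Y : Matrix n n ℂ} (hY : Y.IsHermitian) (p : ℝ) :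
    mpow (cfc (fun x : ℝ => |x|) Y) p = cfc (fun x : ℝ => |x| ^ p) Y :=
  (cfc_comp' _ _ Y ((finite_real_spectrum.image _).continuousOn _)
    (continuousOn_spectrum_real Y _)).symm

lemma schattenNorm_eq_of_isHermitian {Y : Matrix n n ℂ} (hY : Y.IsHermitian) (p : ℝ) :
    schattenNorm p Y = (mpow (cfc (fun x : ℝ => |x|) Y) p).trace.re ^ (1 / p) := by
  have hYY : Yᴴ * Y = mpow (cfc (fun x : ℝ => |x|) Y) 2 := by
    rw [mpow_cfc_abs hY, hY.eq, ← sq, ← cfc_pow_id (R := ℝ) Y 2]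
    exact cfc_congr fun x _ => by rw [Real.rpow_two, sq_abs]
  rw [schattenNorm, hYY, mpow_mpow (posSemidef_cfc Y fun x _ => abs_nonneg x),
    mul_div_cancel₀ p two_ne_zero]

lemma Matrix.IsHermitian.mpow_conj {X A : Matrix n n ℂ} (hX : X.IsHermitian)
    (hA : A.PosSemidef) (r : ℝ) : (mpow A r * X * mpow A r).IsHermitian := by
  simpa only [(posSemidef_mpow hA r).1.eq] using isHermitian_conjTranspose_mul_mul (mpow A r) hX

lemma Matrix.IsHermitian.re_trace_cfc_abs_le_mpow_conj {X σ : Matrix n n ℂ} (hX : X.IsHermitian)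
    (hσ : σ.PosDef) (r : ℝ) :
    (cfc (fun x : ℝ => |x|) X).trace.re ≤
      (mpow σ (-2 * r) * cfc (fun x : ℝ => |x|) (mpow σ r * X * mpow σ r)).trace.re := by
  set S := mpow σ (-r)
  have hS : Sᴴ = S := (posSemidef_mpow hσ.posSemidef _).1
  have hXS : X = Sᴴ * (mpow σ r * X * mpow σ r) * S := by
    simp only [hS, S, ← Matrix.mul_assoc, mpow_mul_mpow hσ, neg_add_cancel, mpow_zero hσ.1,
      Matrix.one_mul]
    rw [Matrix.mul_assoc, mpow_mul_mpow hσ, add_neg_cancel, mpow_zero hσ.1, Matrix.mul_one]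
  have hSS : S * Sᴴ = mpow σ (-2 * r) := by
    rw [hS, mpow_mul_mpow hσ]
    ring_nf
  calc (cfc (fun x : ℝ => |x|) X).trace.re
      ≤ (Sᴴ * cfc (fun x : ℝ => |x|) (mpow σ r * X * mpow σ r) * S).trace.re := by
        conv_lhs => rw [hXS]
        exact (hX.mpow_conj hσ.posSemidef r).re_trace_cfc_abs_conj_le S
    _ = _ := by rw [trace_mul_cycle, ← hSS, Matrix.mul_assoc]

theorem Matrix.PosSemidef.re_trace_mul_le_of_holderConjugate {A B : Matrix n n ℂ}
    (hA : A.PosSemidef) (hB : B.PosSemidef) {p q : ℝ} (hpq : p.HolderConjugate q) :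
    (A * B).trace.re ≤ (mpow A p).trace.re ^ (1 / p) * (mpow B q).trace.re ^ (1 / q) := by
  have hW : star (hA.1.eigenvectorUnitary : Matrix n n ℂ) * hB.1.eigenvectorUnitary ∈
      unitaryGroup n ℂ :=
    mul_mem (Unitary.star_mem (SetLike.coe_mem _)) (SetLike.coe_mem _)
  have habs {C : Matrix n n ℂ} (hC : C.PosSemidef) (r : ℝ) :
      ∑ i, hC.1.eigenvalues i ^ r = ∑ i, |hC.1.eigenvalues i| ^ r :=
    Finset.sum_congr rfl fun i _ => by rw [abs_of_nonneg (hC.eigenvalues_nonneg i)]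
  rw [hA.1.re_trace_mul_eq_sum hB.1, mpow, mpow, hA.1.re_trace_cfc, hB.1.re_trace_cfc,
    habs hA, habs hB]
  exact inner_le_Lp_mul_Lq_of_mem_doublyStochastic (normSq_mem_doublyStochastic hW) _ _ hpq

theorem traceNorm_le_muAlpha_mul_trace_rpow_general {d : ℕ}
    (X σ : Matrix (Fin d) (Fin d) ℂ) (hX : X.IsHermitian)
    (hσ : σ.PosDef) (α : ℝ) (hα : 1 ≤ α) :
    schattenNorm 1 X ≤ muAlpha α X σ * σ.trace.re ^ ((α - 1) / α) := by
  obtain rfl | hα₁ := hα.eq_or_lt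
  · simp [muAlpha, mpow_zero hσ.1]
  set Y := mpow σ ((1 - α) / (2 * α)) * X * mpow σ ((1 - α) / (2 * α))
  have hpq : (α / (α - 1)).HolderConjugate α :=
    ((Real.holderConjugate_iff_eq_conjExponent hα₁).mpr rfl).symm
  have hexp : -2 * ((1 - α) / (2 * α)) = (α - 1) / α := by
    field_simp
    ring
  rw [muAlpha, schattenNorm_eq_of_isHermitian (hX.mpow_conj hσ.posSemidef _),
    schattenNorm_eq_of_isHermitian hX, mpow_one (posSemidef_cfc X fun x _ => abs_nonneg x).1,
    div_one, Real.rpow_one]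
  calc (cfc (fun x : ℝ => |x|) X).trace.re
      ≤ (mpow σ ((α - 1) / α) * cfc (fun x : ℝ => |x|) Y).trace.re :=
        hexp ▸ hX.re_trace_cfc_abs_le_mpow_conj hσ _
    _ ≤ (mpow (mpow σ ((α - 1) / α)) (α / (α - 1))).trace.re ^ (1 / (α / (α - 1))) *
          (mpow (cfc (fun x : ℝ => |x|) Y) α).trace.re ^ (1 / α) :=
        (posSemidef_mpow hσ.posSemidef _).re_trace_mul_le_of_holderConjugate
          (posSemidef_cfc Y fun x _ => abs_nonneg x) hpq
    _ = (mpow (cfc (fun x : ℝ => |x|) Y) α).trace.re ^ (1 / α) * σ.trace.re ^ ((α - 1) / α) := by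
        rw [mpow_mpow hσ.posSemidef, div_mul_div_cancel₀ (zero_lt_one.trans hα₁).ne',
          div_self (sub_pos.mpr hα₁).ne', mpow_one hσ.1, one_div_div, mul_comm]

/-- `‖X‖₁ ≤ μ_α(X‖σ) · (Tr σ)^{(α-1)/α}` for Hermitian `X` and positive definite `σ`. -/
theorem traceNorm_le_muAlpha_mul_trace_rpow {d : ℕ}
    (X σ : Matrix (Fin d) (Fin d) ℂ) (hX : X.IsHermitian) (hX0 : X ≠ 0)
    (hσ : σ.PosDef) (α : ℝ) (hα : 1 ≤ α) :
    schattenNorm 1 X ≤ muAlpha α X σ * σ.trace.re ^ ((α - 1) / α) :=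
  traceNorm_le_muAlpha_mul_trace_rpow_general X σ hX hσ α hα
end
end

section
/- For a Hermitian matrix X and a positive definite matrix σ, the limit as α → ∞ of ‖σ^{(1-α)/(2α)} X σ^{(1-α)/(2α)}‖_α equals ‖σ^{-1/2} X σ^{-1/2}‖_∞ (the operator norm). -/
open scoped Classical
open Matrix ComplexOrder

noncomputable section

variable {n : Type*} [Fintype n] [DecidableEq n]

/-- Operator norm (Schatten `∞`-norm) of a matrix. -/
noncomputable def opNorm (Y : Matrix n n ℂ) : ℝ :=
  ‖Matrix.toEuclideanCLM (𝕜 := ℂ) Y‖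

/-! The matrices `Y_α = σ^{(1-α)/(2α)} X σ^{(1-α)/(2α)}` are Hermitian and converge to
`Y = σ^{-1/2} X σ^{-1/2}`. For Hermitian `Y_α` with eigenvalue vector `λ`, `‖Y_α‖_α` is the
`ℓ^α`-norm of `λ` and `‖Y_α‖_∞` its sup norm, so `‖Y_α‖_∞ ≤ ‖Y_α‖_α ≤ d^{1/α} ‖Y_α‖_∞`.
Since `d^{1/α} → 1` and `‖Y_α‖_∞ → ‖Y‖_∞`, the limit follows by squeezing. The squeeze only needs
the sup norms to converge, not the eigenvalues themselves, whose labelling need not be continuous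
in `α`. -/

open Filter Topology

section FiniteFamily

variable {ι : Type*} [Fintype ι]

theorem norm_le_sum_rpow_rpow_one_div (v : ι → ℝ) {p : ℝ} (hp : 0 < p) :
    ‖v‖ ≤ (∑ i, |v i| ^ p) ^ (1 / p) := by
  refine (pi_norm_le_iff_of_nonneg (by positivity)).2 fun i => ?_
  calc ‖v i‖ = (|v i| ^ p) ^ (1 / p) := by
        rw [Real.norm_eq_abs, ← Real.rpow_mul (abs_nonneg _), mul_one_div_cancel hp.ne',
          Real.rpow_one]
    _ ≤ (∑ j, |v j| ^ p) ^ (1 / p) := by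
        gcongr
        exact Finset.single_le_sum (f := fun j => |v j| ^ p) (fun j _ => by positivity)
          (Finset.mem_univ i)

theorem sum_rpow_rpow_one_div_le_card_rpow_mul_norm (v : ι → ℝ) {p : ℝ}
    (hp : 0 < p) : (∑ i, |v i| ^ p) ^ (1 / p) ≤ (Fintype.card ι : ℝ) ^ (1 / p) * ‖v‖ := by
  calc (∑ i, |v i| ^ p) ^ (1 / p) ≤ (∑ _i : ι, ‖v‖ ^ p) ^ (1 / p) := by
        gcongr with i
        exact norm_le_pi_norm v i
    _ = (Fintype.card ι : ℝ) ^ (1 / p) * ‖v‖ := by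
        rw [Finset.sum_const, Finset.card_univ, nsmul_eq_mul,
          Real.mul_rpow (by positivity) (by positivity), ← Real.rpow_mul (norm_nonneg _),
          mul_one_div_cancel hp.ne', Real.rpow_one]

theorem tendsto_sum_rpow_rpow_one_div_atTop {v : ℝ → ι → ℝ} {L : ℝ}
    (hv : Tendsto (fun p => ‖v p‖) atTop (𝓝 L)) :
    Tendsto (fun p => (∑ i, |v p i| ^ p) ^ (1 / p)) atTop (𝓝 L) := by
  rcases isEmpty_or_nonempty ι with hι | hι
  · have hL : L = 0 := tendsto_nhds_unique hv (by simp [Pi.norm_def])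
    refine hL ▸ tendsto_const_nhds.congr' ?_
    filter_upwards [eventually_gt_atTop 0] with p hp
    simp [Real.zero_rpow (inv_pos.2 hp).ne']
  have hcard : Tendsto (fun p : ℝ => (Fintype.card ι : ℝ) ^ (1 / p)) atTop (𝓝 1) := by
    have hinv : Tendsto (fun p : ℝ => 1 / p) atTop (𝓝 0) := by
      simpa only [one_div] using tendsto_inv_atTop_zero
    have h := (Real.continuousAt_const_rpow
      (Nat.cast_ne_zero.2 (Fintype.card_ne_zero (α := ι)))).tendsto.comp hinv
    simpa only [Real.rpow_zero, Function.comp_def] using h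
  refine tendsto_of_tendsto_of_tendsto_of_le_of_le' hv
    (by simpa only [one_mul] using hcard.mul hv) ?_ ?_
  · filter_upwards [eventually_gt_atTop 0] with p hp
    exact norm_le_sum_rpow_rpow_one_div (v p) hp
  · filter_upwards [eventually_gt_atTop 0] with p hp
    exact sum_rpow_rpow_one_div_le_card_rpow_mul_norm (v p) hp

end FiniteFamily

theorem Matrix.IsHermitian.trace_cfc {Z : Matrix n n ℂ} (hZ : Z.IsHermitian) (f : ℝ → ℝ) :
    (cfc f Z).trace = ∑ i, (f (hZ.eigenvalues i) : ℂ) := by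
  rw [hZ.cfc_eq, IsHermitian.cfc, Unitary.conjStarAlgAut_apply, trace_mul_cycle,
    Unitary.star_mul_self_of_mem (SetLike.coe_mem _), one_mul, trace_diagonal]
  rfl

theorem Matrix.IsHermitian.schattenNorm_eq {Z : Matrix n n ℂ} (hZ : Z.IsHermitian) (p : ℝ) :
    schattenNorm p Z = (∑ i, |hZ.eigenvalues i| ^ p) ^ (1 / p) := by
  have hsq : mpow (Zᴴ * Z) (p / 2) = cfc (fun x : ℝ => (x ^ 2) ^ (p / 2)) Z := by
    rw [mpow, hZ.eq, ← sq]
    exact (cfc_comp_pow _ _ _ ((finite_real_spectrum.image _).continuousOn _)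
      hZ.isSelfAdjoint).symm
  have habs (x : ℝ) : (x ^ 2) ^ (p / 2) = |x| ^ p := by
    rw [← sq_abs, ← Real.rpow_natCast, ← Real.rpow_mul (abs_nonneg x)]
    push_cast
    ring_nf
  rw [schattenNorm, hsq, hZ.trace_cfc]
  simp only [habs, ← Complex.ofReal_sum, Complex.ofReal_re]

open scoped Matrix.Norms.L2Operator in
theorem Matrix.IsHermitian.opNorm_eq_norm_eigenvalues {Z : Matrix n n ℂ} (hZ : Z.IsHermitian) :
    opNorm Z = ‖hZ.eigenvalues‖ := by
  rw [opNorm, ← cstar_norm_def]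
  conv_lhs => rw [hZ.spectral_theorem, Unitary.conjStarAlgAut_apply]
  rw [CStarRing.norm_mul_mem_unitary _ (Unitary.star_mem (SetLike.coe_mem _)),
    CStarRing.norm_mem_unitary_mul _ (SetLike.coe_mem _), l2_opNorm_diagonal]
  simp [Pi.norm_def]

open scoped Matrix.Norms.L2Operator in
theorem continuous_opNorm : Continuous (opNorm : Matrix n n ℂ → ℝ) :=
  continuous_norm

theorem isHermitian_mpow (A : Matrix n n ℂ) (r : ℝ) : (mpow A r).IsHermitian :=
  cfc_predicate _ A

theorem continuous_mpow {A : Matrix n n ℂ} (hA : A.PosDef) :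
    Continuous fun r : ℝ => mpow A r := by
  simp only [mpow, hA.1.cfc_eq, IsHermitian.cfc, Unitary.conjStarAlgAut_apply]
  refine (continuous_const.matrix_mul (Continuous.matrix_diagonal ?_)).matrix_mul continuous_const
  refine continuous_pi fun i => Complex.continuous_ofReal.comp ?_
  exact continuous_const.rpow continuous_id fun _ => Or.inl (hA.eigenvalues_pos i).ne'

theorem tendsto_schattenNorm_atTop {Z : ℝ → Matrix n n ℂ} {Z₀ : Matrix n n ℂ}
    (hZ : ∀ p, (Z p).IsHermitian) (h : Tendsto Z atTop (𝓝 Z₀)) :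
    Tendsto (fun p => schattenNorm p (Z p)) atTop (𝓝 (opNorm Z₀)) := by
  simp only [fun p => (hZ p).schattenNorm_eq p]
  refine tendsto_sum_rpow_rpow_one_div_atTop ?_
  simpa only [fun p => ((hZ p).opNorm_eq_norm_eigenvalues).symm, Function.comp_def] using
    (continuous_opNorm.tendsto Z₀).comp h

theorem tendsto_muAlpha_atTop_general {d : ℕ}
    (X σ : Matrix (Fin d) (Fin d) ℂ) (hX : X.IsHermitian)
    (hσ : σ.PosDef) :
    Filter.Tendsto (fun α : ℝ => muAlpha α X σ) Filter.atTop
      (nhds (opNorm (mpow σ (-(1 / 2 : ℝ)) * X * mpow σ (-(1 / 2 : ℝ))))) := by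
  have hexp : Tendsto (fun α : ℝ => (1 - α) / (2 * α)) atTop (𝓝 (-(1 / 2))) := by
    have h := ((tendsto_inv_atTop_zero (𝕜 := ℝ)).sub_const 1).div_const 2
    rw [zero_sub, neg_div] at h
    refine h.congr' ?_
    filter_upwards [eventually_gt_atTop 0] with α hα
    field_simp
  have hpow := ((continuous_mpow hσ).tendsto _).comp hexp
  refine tendsto_schattenNorm_atTop (fun α => ?_) ((hpow.mul tendsto_const_nhds).mul hpow)
  simpa only [(isHermitian_mpow σ _).eq] using isHermitian_conjTranspose_mul_mul (mpow σ _) hX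

/-- `lim_{α→∞} μ_α(X‖σ) = ‖σ^{-1/2} X σ^{-1/2}‖_∞`. -/
theorem tendsto_muAlpha_atTop {d : ℕ}
    (X σ : Matrix (Fin d) (Fin d) ℂ) (hX : X.IsHermitian) (hX0 : X ≠ 0)
    (hσ : σ.PosDef) :
    Filter.Tendsto (fun α : ℝ => muAlpha α X σ) Filter.atTop
      (nhds (opNorm (mpow σ (-(1 / 2 : ℝ)) * X * mpow σ (-(1 / 2 : ℝ))))) :=
  tendsto_muAlpha_atTop_general X σ hX hσ
end
end

section
/- Let Y_XB = Σ_x p(x)|x⟩⟨x| ⊗ Y_B^x be a block-diagonal Hermitian matrix with probability weights p(x), and σ_XB = Σ_x q(x)|x⟩⟨x| ⊗ σ_B^x with q(x) > 0 and σ_B^x positive definite. Then for α > 1: ν_α(Y_XB‖σ_XB) ≥ Σ_x p(x) ν_α(Y_B^x‖σ_B^x) + ((α-1)/α) D(p‖q), where D(p‖q) = Σ_x p(x) log₂(p(x)/q(x)). -/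
/-!
All matrix functions act blockwise on a classical-quantum operator `∑ₓ |x⟩⟨x| ⊗ M x`, and scalars
factor out of `μ_α`, so `μ_α(Y‖σ)^α = ∑ₓ (p(x) q(x)^{(1-α)/α} μ_α(Y_x‖σ_x))^α`. Writing this sum
as `∑ₓ p(x) a(x)` and applying Jensen's inequality to the concave `log₂` gives the bound; the
powers of `p(x)` and `q(x)` inside `a(x)` collect into `((α-1)/α) D(p‖q)`.
-/

open scoped Classical
open Matrix ComplexOrder

noncomputable section

variable {n : Type*} [Fintype n] [DecidableEq n]

lemma Set.Finite.exists_polynomial_eqOn {s : Set ℝ} (hs : s.Finite) (f : ℝ → ℝ) :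
    ∃ P : Polynomial ℝ, s.EqOn f P.eval :=
  ⟨Lagrange.interpolate hs.toFinset id f, fun _ ht =>
    (Lagrange.eval_interpolate_at_node f (Set.injOn_id _) (hs.mem_toFinset.2 ht)).symm⟩

lemma Matrix.IsHermitian.cfc_eq_aeval {m : Type*} [Fintype m] [DecidableEq m]
    {A : Matrix m m ℂ} (hA : A.IsHermitian) {f : ℝ → ℝ} {P : Polynomial ℝ}
    (hP : (spectrum ℝ A).EqOn f P.eval) : cfc f A = Polynomial.aeval A P := by
  rw [cfc_congr hP]
  exact cfc_polynomial P A hA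

lemma mpow_smul {A : Matrix n n ℂ} (hA : A.PosSemidef) {c : ℝ} (hc : 0 < c) (r : ℝ) :
    mpow (c • A) r = c ^ r • mpow A r := by
  have hspec : ∀ t ∈ spectrum ℝ A, 0 ≤ t := by
    rw [hA.isHermitian.spectrum_real_eq_range_eigenvalues]
    rintro _ ⟨i, rfl⟩
    exact hA.eigenvalues_nonneg i
  unfold mpow
  rw [← cfc_comp_smul c (fun x : ℝ => x ^ r) A ((finite_real_spectrum.image _).continuousOn _)
    hA.isHermitian.isSelfAdjoint,
    ← cfc_smul (c ^ r) (fun x : ℝ => x ^ r) A (finite_real_spectrum.continuousOn _)]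
  refine cfc_congr fun t ht => ?_
  simp only [smul_eq_mul]
  exact Real.mul_rpow hc.le (hspec t ht)

lemma isUnit_mpow {A : Matrix n n ℂ} (hA : A.PosDef) (r : ℝ) : IsUnit (mpow A r) := by
  refine (isUnit_cfc_iff _ A (finite_real_spectrum.continuousOn _) hA.isHermitian).2 ?_
  rw [hA.isHermitian.spectrum_real_eq_range_eigenvalues]
  rintro _ ⟨i, rfl⟩
  exact (Real.rpow_pos_of_pos (hA.eigenvalues_pos i) r).ne'

lemma trace_mpow {A : Matrix n n ℂ} (hA : A.IsHermitian) (r : ℝ) :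
    (mpow A r).trace = ((∑ i, hA.eigenvalues i ^ r : ℝ) : ℂ) := by
  rw [mpow, hA.cfc_eq, IsHermitian.cfc, Unitary.conjStarAlgAut_apply, trace_mul_cycle,
    Unitary.star_mul_self_of_mem (SetLike.coe_mem _), one_mul, trace_diagonal]
  push_cast
  rfl

lemma re_trace_mpow_nonneg {A : Matrix n n ℂ} (hA : A.PosSemidef) (r : ℝ) :
    0 ≤ (mpow A r).trace.re := by
  rw [trace_mpow hA.isHermitian, Complex.ofReal_re]
  exact Finset.sum_nonneg fun i _ => Real.rpow_nonneg (hA.eigenvalues_nonneg i) r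

lemma re_trace_mpow_pos {A : Matrix n n ℂ} (hA : A.PosSemidef) (hA0 : A ≠ 0) (r : ℝ) :
    0 < (mpow A r).trace.re := by
  obtain ⟨i, hi⟩ : ∃ i, hA.isHermitian.eigenvalues i ≠ 0 := by
    by_contra! h
    exact hA0 (hA.isHermitian.eigenvalues_eq_zero_iff.1 (funext h))
  rw [trace_mpow hA.isHermitian, Complex.ofReal_re]
  exact Finset.sum_pos' (fun j _ => Real.rpow_nonneg (hA.eigenvalues_nonneg j) r)
    ⟨i, Finset.mem_univ i, Real.rpow_pos_of_pos ((hA.eigenvalues_nonneg i).lt_of_ne' hi) r⟩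

lemma schattenNorm_pos {Z : Matrix n n ℂ} (hZ : Z ≠ 0) (p : ℝ) : 0 < schattenNorm p Z := by
  refine Real.rpow_pos_of_pos (re_trace_mpow_pos (posSemidef_conjTranspose_mul_self Z) ?_ _) _
  rwa [Ne, conjTranspose_mul_self_eq_zero]

lemma schattenNorm_smul {p : ℝ} (hp : p ≠ 0) {c : ℝ} (hc : 0 < c) (Z : Matrix n n ℂ) :
    schattenNorm p (c • Z) = c * schattenNorm p Z := by
  have hZZ : (c • Z)ᴴ * (c • Z) = (c * c) • (Zᴴ * Z) := by
    rw [conjTranspose_smul, star_trivial, smul_mul_smul_comm]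
  have hcc : (c * c) ^ (p / 2) = c ^ p := by
    rw [← sq, ← Real.rpow_natCast, ← Real.rpow_mul hc.le]
    norm_num [mul_div_cancel₀]
  rw [schattenNorm, schattenNorm, hZZ, mpow_smul (posSemidef_conjTranspose_mul_self Z)
    (mul_pos hc hc), trace_smul, Complex.real_smul, Complex.re_ofReal_mul, hcc,
    Real.mul_rpow (Real.rpow_nonneg hc.le p)
      (re_trace_mpow_nonneg (posSemidef_conjTranspose_mul_self Z) _),
    one_div, Real.rpow_rpow_inv hc.le hp]

lemma muAlpha_pos {X σ : Matrix n n ℂ} (hX : X ≠ 0) (hσ : σ.PosDef) (α : ℝ) :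
    0 < muAlpha α X σ := by
  refine schattenNorm_pos ?_ α
  have hu := isUnit_mpow hσ ((1 - α) / (2 * α))
  rwa [Ne, hu.mul_left_eq_zero, hu.mul_right_eq_zero]

lemma muAlpha_smul {α : ℝ} (hα : α ≠ 0) {a b : ℝ} (ha : 0 < a) (hb : 0 < b)
    (X : Matrix n n ℂ) {σ : Matrix n n ℂ} (hσ : σ.PosSemidef) :
    muAlpha α (a • X) (b • σ) = a * b ^ ((1 - α) / α) * muAlpha α X σ := by
  set r := (1 - α) / (2 * α)
  have hcoeff : b ^ r * a * b ^ r = a * b ^ ((1 - α) / α) := by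
    rw [mul_right_comm, ← Real.rpow_add hb, mul_comm, show r + r = (1 - α) / α by ring]
  rw [muAlpha, muAlpha, mpow_smul hσ hb, smul_mul_smul_comm, smul_mul_smul_comm, hcoeff,
    schattenNorm_smul hα (mul_pos ha (Real.rpow_pos_of_pos hb _))]

section ClassicalQuantum

variable {ι m : Type*} [DecidableEq ι]

/-- `cq M = ∑ₓ |x⟩⟨x| ⊗ M x`, with the classical index first. -/
def cq (M : ι → Matrix m m ℂ) : Matrix (ι × m) (ι × m) ℂ :=
  reindex (Equiv.prodComm m ι) (Equiv.prodComm m ι) (blockDiagonal M)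

lemma cq_apply (M : ι → Matrix m m ℂ) (a b : ι × m) :
    cq M a b = if a.1 = b.1 then M a.1 a.2 b.2 else 0 := by
  simp [cq, blockDiagonal_apply]

def cqAlgHom [Fintype ι] [Fintype m] [DecidableEq m] :
    (ι → Matrix m m ℂ) →ₐ[ℝ] Matrix (ι × m) (ι × m) ℂ :=
  (reindexAlgEquiv ℝ ℂ (Equiv.prodComm m ι)).toAlgHom.comp
    { blockDiagonalRingHom m ι ℂ with
      commutes' := fun r => blockDiagonal_diagonal fun _ _ => (r : ℂ) }

lemma cqAlgHom_apply [Fintype ι] [Fintype m] [DecidableEq m] (M : ι → Matrix m m ℂ) :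
    cqAlgHom M = cq M :=
  rfl

lemma cq_mul [Fintype ι] [Fintype m] [DecidableEq m] (M N : ι → Matrix m m ℂ) :
    cq M * cq N = cq (fun x => M x * N x) :=
  (map_mul cqAlgHom M N).symm

lemma cq_conjTranspose (M : ι → Matrix m m ℂ) : (cq M)ᴴ = cq (fun x => (M x)ᴴ) := by
  rw [cq, conjTranspose_reindex, blockDiagonal_conjTranspose]
  rfl

lemma cq_isHermitian {M : ι → Matrix m m ℂ} (hM : ∀ x, (M x).IsHermitian) :
    (cq M).IsHermitian :=
  (isHermitian_blockDiagonal_iff.2 hM).submatrix _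

lemma trace_cq [Fintype ι] [Fintype m] (M : ι → Matrix m m ℂ) :
    (cq M).trace = ∑ x, (M x).trace := by
  rw [cq, ← trace_blockDiagonal]
  exact Fintype.sum_equiv (Equiv.prodComm m ι).symm _ _ fun _ => rfl

/-- On the finitely many eigenvalues involved `f` is a polynomial, which commutes with the
algebra map `cq`. -/
lemma cfc_cq [Fintype ι] [Fintype m] [DecidableEq m]
    {M : ι → Matrix m m ℂ} (hM : ∀ x, (M x).IsHermitian) (f : ℝ → ℝ) :
    cfc f (cq M) = cq (fun x => cfc f (M x)) := by
  have hS : (spectrum ℝ (cq M) ∪ ⋃ x, spectrum ℝ (M x)).Finite :=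
    finite_real_spectrum.union (Set.finite_iUnion fun _ => finite_real_spectrum)
  obtain ⟨P, hP⟩ := hS.exists_polynomial_eqOn f
  have hblock (x : ι) : cfc f (M x) = Polynomial.aeval (M x) P :=
    (hM x).cfc_eq_aeval (hP.mono (Set.subset_union_of_subset_right
      (Set.subset_iUnion (fun y => spectrum ℝ (M y)) x) _))
  calc cfc f (cq M) = Polynomial.aeval (cq M) P :=
        (cq_isHermitian hM).cfc_eq_aeval (hP.mono Set.subset_union_left)
    _ = cq (Polynomial.aeval M P) := by
        rw [← cqAlgHom_apply, ← cqAlgHom_apply]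
        exact Polynomial.aeval_algHom_apply cqAlgHom M P
    _ = cq (fun x => cfc f (M x)) := by
        rw [Polynomial.aeval_pi_apply]
        simp only [hblock]

lemma mpow_cq [Fintype ι] [Fintype m] [DecidableEq m]
    {M : ι → Matrix m m ℂ} (hM : ∀ x, (M x).IsHermitian) (r : ℝ) :
    mpow (cq M) r = cq (fun x => mpow (M x) r) :=
  cfc_cq hM _

lemma schattenNorm_cq [Fintype ι] [Fintype m] [DecidableEq m]
    {p : ℝ} (hp : p ≠ 0) (Z : ι → Matrix m m ℂ) :
    schattenNorm p (cq Z) = (∑ x, schattenNorm p (Z x) ^ p) ^ (1 / p) := by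
  have hZZ (x : ι) := posSemidef_conjTranspose_mul_self (Z x)
  rw [schattenNorm, cq_conjTranspose, cq_mul, mpow_cq fun x => (hZZ x).isHermitian, trace_cq,
    Complex.re_sum]
  congr 1
  refine Finset.sum_congr rfl fun x _ => ?_
  rw [schattenNorm, ← Real.rpow_mul (re_trace_mpow_nonneg (hZZ x) _), one_div_mul_cancel hp,
    Real.rpow_one]

lemma muAlpha_cq [Fintype ι] [Fintype m] [DecidableEq m]
    {α : ℝ} (hα : α ≠ 0) (X : ι → Matrix m m ℂ) {σ : ι → Matrix m m ℂ}
    (hσ : ∀ x, (σ x).IsHermitian) :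
    muAlpha α (cq X) (cq σ) = (∑ x, muAlpha α (X x) (σ x) ^ α) ^ (1 / α) := by
  rw [muAlpha, mpow_cq hσ, cq_mul, cq_mul]
  exact schattenNorm_cq hα _

end ClassicalQuantum

lemma sum_mul_logb_le_logb_sum_mul {ι : Type*} {s : Finset ι} {b : ℝ} (hb : 1 < b)
    {w a : ι → ℝ} (hw : ∀ i ∈ s, 0 ≤ w i) (hw1 : ∑ i ∈ s, w i = 1) (ha : ∀ i ∈ s, 0 < a i) :
    ∑ i ∈ s, w i * Real.logb b (a i) ≤ Real.logb b (∑ i ∈ s, w i * a i) := by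
  have hjensen := strictConcaveOn_log_Ioi.concaveOn.le_map_sum hw hw1 ha
  simp only [smul_eq_mul] at hjensen
  simp only [Real.logb, ← mul_div_assoc, ← Finset.sum_div]
  exact div_le_div_of_nonneg_right hjensen (Real.log_pos hb).le

lemma sum_mul_logb_add_le_logb_rpow_sum {ι : Type*} [Fintype ι] {p q μ : ι → ℝ}
    (hp : ∀ x, 0 < p x) (hpsum : ∑ x, p x = 1) (hq : ∀ x, 0 < q x) (hμ : ∀ x, 0 < μ x)
    {α : ℝ} (hα : 0 < α) :
    ∑ x, p x * Real.logb 2 (μ x) + ((α - 1) / α) * ∑ x, p x * Real.logb 2 (p x / q x)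
      ≤ Real.logb 2 ((∑ x, (p x * q x ^ ((1 - α) / α) * μ x) ^ α) ^ (1 / α)) := by
  set c : ι → ℝ := fun x => p x * q x ^ ((1 - α) / α) * μ x
  have hpq (x : ι) : 0 < p x * q x ^ ((1 - α) / α) :=
    mul_pos (hp x) (Real.rpow_pos_of_pos (hq x) _)
  have hc (x : ι) : 0 < c x := mul_pos (hpq x) (hμ x)
  have hterm (x : ι) : p x * Real.logb 2 (μ x) + (α - 1) / α * (p x * Real.logb 2 (p x / q x))
      = 1 / α * (p x * Real.logb 2 (c x ^ α / p x)) := by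
    rw [Real.logb_div (Real.rpow_pos_of_pos (hc x) α).ne' (hp x).ne',
      Real.logb_rpow_eq_mul_logb_of_pos (hc x), Real.logb_mul (hpq x).ne' (hμ x).ne',
      Real.logb_mul (hp x).ne' (Real.rpow_pos_of_pos (hq x) _).ne',
      Real.logb_rpow_eq_mul_logb_of_pos (hq x), Real.logb_div (hp x).ne' (hq x).ne']
    field_simp
    ring
  have hsum : ∑ x, p x * (c x ^ α / p x) = ∑ x, c x ^ α :=
    Finset.sum_congr rfl fun x _ => mul_div_cancel₀ _ (hp x).ne'
  calc ∑ x, p x * Real.logb 2 (μ x) + ((α - 1) / α) * ∑ x, p x * Real.logb 2 (p x / q x)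
      = 1 / α * ∑ x, p x * Real.logb 2 (c x ^ α / p x) := by
        rw [Finset.mul_sum, Finset.mul_sum, ← Finset.sum_add_distrib]
        exact Finset.sum_congr rfl fun x _ => hterm x
    _ ≤ 1 / α * Real.logb 2 (∑ x, c x ^ α) := by
        rw [← hsum]
        refine mul_le_mul_of_nonneg_left ?_ (by positivity)
        exact sum_mul_logb_le_logb_sum_mul one_lt_two (fun x _ => (hp x).le) hpsum
          fun x _ => div_pos (Real.rpow_pos_of_pos (hc x) α) (hp x)
    _ = Real.logb 2 ((∑ x, c x ^ α) ^ (1 / α)) := by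
        rw [Real.logb_rpow_eq_mul_logb_of_pos
          (Finset.sum_pos (fun x _ => Real.rpow_pos_of_pos (hc x) α)
          (Finset.nonempty_of_sum_ne_zero (hpsum ▸ one_ne_zero)))]

theorem nuAlpha_block_diagonal_general {ι : Type*} [Fintype ι] [DecidableEq ι] {d : ℕ}
    (p q : ι → ℝ) (hp : ∀ x, 0 < p x) (hpsum : ∑ x, p x = 1) (hq : ∀ x, 0 < q x)
    (Yb : ι → Matrix (Fin d) (Fin d) ℂ)
    (hYb0 : ∀ x, Yb x ≠ 0)
    (σb : ι → Matrix (Fin d) (Fin d) ℂ) (hσb : ∀ x, (σb x).PosDef)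
    (Y σ : Matrix (ι × Fin d) (ι × Fin d) ℂ)
    (hY : Y = fun a b => if a.1 = b.1 then (p a.1 : ℂ) * Yb a.1 a.2 b.2 else 0)
    (hσ : σ = fun a b => if a.1 = b.1 then (q a.1 : ℂ) * σb a.1 a.2 b.2 else 0)
    (α : ℝ) (hα : 1 < α) :
    ∑ x, p x * Real.logb 2 (muAlpha α (Yb x) (σb x))
        + ((α - 1) / α) * ∑ x, p x * Real.logb 2 (p x / q x)
      ≤ Real.logb 2 (muAlpha α Y σ) := by
  have hα0 : 0 < α := by linarith
  have hYcq : Y = cq (fun x => p x • Yb x) := by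
    ext a b
    simp [hY, cq_apply, Complex.real_smul]
  have hσcq : σ = cq (fun x => q x • σb x) := by
    ext a b
    simp [hσ, cq_apply, Complex.real_smul]
  have hμ : muAlpha α Y σ =
      (∑ x, (p x * q x ^ ((1 - α) / α) * muAlpha α (Yb x) (σb x)) ^ α) ^ (1 / α) := by
    rw [hYcq, hσcq, muAlpha_cq hα0.ne' _ fun x => ((hσb x).posSemidef.smul (hq x).le).isHermitian]
    simp only [muAlpha_smul hα0.ne' (hp _) (hq _) _ (hσb _).posSemidef]
  rw [hμ]
  exact sum_mul_logb_add_le_logb_rpow_sum hp hpsum hq (fun x => muAlpha_pos (hYb0 x) (hσb x) α) hα0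

/-- for classical-quantum block-diagonal operators,
`ν_α(Y_XB‖σ_XB) ≥ Σ_x p(x) ν_α(Y_B^x‖σ_B^x) + ((α-1)/α) D(p‖q)`. -/
theorem nuAlpha_block_diagonal {ι : Type*} [Fintype ι] [DecidableEq ι] {d : ℕ}
    (p q : ι → ℝ) (hp : ∀ x, 0 < p x) (hpsum : ∑ x, p x = 1) (hq : ∀ x, 0 < q x)
    (Yb : ι → Matrix (Fin d) (Fin d) ℂ) (hYbH : ∀ x, (Yb x).IsHermitian)
    (hYb0 : ∀ x, Yb x ≠ 0)
    (σb : ι → Matrix (Fin d) (Fin d) ℂ) (hσb : ∀ x, (σb x).PosDef)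
    (Y σ : Matrix (ι × Fin d) (ι × Fin d) ℂ)
    (hY : Y = fun a b => if a.1 = b.1 then (p a.1 : ℂ) * Yb a.1 a.2 b.2 else 0)
    (hσ : σ = fun a b => if a.1 = b.1 then (q a.1 : ℂ) * σb a.1 a.2 b.2 else 0)
    (α : ℝ) (hα : 1 < α) :
    ∑ x, p x * Real.logb 2 (muAlpha α (Yb x) (σb x))
        + ((α - 1) / α) * ∑ x, p x * Real.logb 2 (p x / q x)
      ≤ Real.logb 2 (muAlpha α Y σ) :=
  nuAlpha_block_diagonal_general p q hp hpsum hq Yb hYb0 σb hσb Y σ hY hσ α hα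
end
end

section
/- The infimum defining the α-logarithmic negativity over PPT states equals the infimum over faithful PPT states: E_N^α(ρ_AB) = inf{ν_α(T_B(ρ_AB)‖σ_AB) : σ_AB > 0, T_B(σ_AB) > 0, Tr σ_AB = 1}. -/
open scoped Classical
open Matrix ComplexOrder

noncomputable section

variable {n : Type*} [Fintype n] [DecidableEq n]

/-- Partial transpose on the second tensor factor. -/
def ptranspose {a b : Type*} (ρ : Matrix (a × b) (a × b) ℂ) : Matrix (a × b) (a × b) ℂ :=
  fun x y => ρ (x.1, y.2) (y.1, x.2)

/-- PPT states: positive semidefinite, positive partial transpose, unit trace. -/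
def IsPPT {a b : Type*} [Fintype a] [Fintype b] (σ : Matrix (a × b) (a × b) ℂ) : Prop :=
  σ.PosSemidef ∧ (ptranspose σ).PosSemidef ∧ σ.trace = 1

/-- `ν_α(X‖σ)`, with the convention that it is `⊤` when `supp(X) ⊄ supp(σ)`. -/
noncomputable def nuAlpha (α : ℝ) (X σ : Matrix n n ℂ) : EReal :=
  if LinearMap.range (Matrix.toLin' X) ≤ LinearMap.range (Matrix.toLin' σ) then
    ((Real.logb 2 (muAlpha α X σ) : ℝ) : EReal)
  else ⊤

/-- Logarithmic negativity `E_N(ρ) = log₂ ‖T_B(ρ)‖₁`. -/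
noncomputable def EN {a b : Type*} [Fintype a] [Fintype b] [DecidableEq a] [DecidableEq b]
    (ρ : Matrix (a × b) (a × b) ℂ) : ℝ :=
  Real.logb 2 (schattenNorm 1 (ptranspose ρ))

/-- `α`-logarithmic negativity `E_N^α(ρ) = inf_{σ ∈ PPT} ν_α(T_B(ρ)‖σ)`. -/
noncomputable def ENalpha {a b : Type*} [Fintype a] [Fintype b] [DecidableEq a] [DecidableEq b]
    (α : ℝ) (ρ : Matrix (a × b) (a × b) ℂ) : EReal :=
  ⨅ σ : {σ : Matrix (a × b) (a × b) ℂ // IsPPT σ}, nuAlpha α (ptranspose ρ) σ.1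

/-!
Every faithful PPT state is a PPT state, so only `≥` needs an argument. For a PPT state `σ`
with `supp T_B(ρ) ⊆ supp σ`, the depolarized states `σ_ε = (1 - ε) σ + ε 𝟙/d` are faithful
and PPT (the partial transpose commutes with depolarizing), and `ν_α(T_B(ρ)‖σ_ε) → ν_α(T_B(ρ)‖σ)`
as `ε → 0`. The power `σ_ε^{(1-α)/(2α)}` blows up on `ker σ` when `α > 1`, but the support
condition makes `T_B(ρ) = P T_B(ρ) P` for the support projection `P` of `σ`, so only the
eigenvalues of `σ` off zero enter the sandwiched operator, and there the functional calculus
converges.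
-/

open Filter Topology

theorem Real.upperSemicontinuous_logb {b : ℝ} (hb : 1 < b) :
    UpperSemicontinuous (Real.logb b) := by
  intro x c hc
  by_cases hx : x = 0
  · subst hx
    rw [Real.logb_zero] at hc
    filter_upwards [Ioo_mem_nhds (neg_lt_zero.2 one_pos) one_pos] with y hy
    rw [← Real.logb_abs]
    exact (Real.logb_nonpos hb (abs_nonneg y) (abs_le.2 ⟨hy.1.le, hy.2.le⟩)).trans_lt hc
  · exact (Real.continuousAt_logb hx).eventually (eventually_lt_nhds hc)

section MatrixAnalysis

variable {m : Type*} [Fintype m] [DecidableEq m]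

open scoped Matrix.Norms.L2Operator in
theorem continuous_schattenNorm {p : ℝ} (hp : 0 < p) :
    Continuous (schattenNorm p : Matrix m m ℂ → ℝ) := by
  have hcfc : Continuous fun Y : Matrix m m ℂ => cfc (fun x : ℝ => x ^ (p / 2)) (Yᴴ * Y) :=
    Continuous.cfc_of_mem_nhdsSet _ (s := Set.univ) univ_mem (by fun_prop)
      (fun Y => (isHermitian_conjTranspose_mul_self Y).isSelfAdjoint)
      (Real.continuous_rpow_const (by positivity)).continuousOn
  exact (Complex.continuous_re.comp hcfc.matrix_trace).rpow_const
    fun _ => Or.inr (by positivity)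

theorem Matrix.IsHermitian.tendsto_cfc {ι : Type*} {l : Filter ι} {A : Matrix m m ℂ}
    (hA : A.IsHermitian) {F : ι → ℝ → ℝ} {f : ℝ → ℝ}
    (h : ∀ x, Tendsto (fun k => F k x) l (𝓝 (f x))) :
    Tendsto (fun k => cfc (F k) A) l (𝓝 (cfc f A)) := by
  simp only [hA.cfc_eq, Matrix.IsHermitian.cfc, Unitary.conjStarAlgAut_apply]
  refine ((continuous_const.matrix_mul continuous_id).matrix_mul continuous_const).tendsto _
    |>.comp ?_
  refine (continuous_id.matrix_diagonal).tendsto _ |>.comp (tendsto_pi_nhds.2 fun i => ?_)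
  exact (Complex.continuous_ofReal.tendsto _).comp (h _)

theorem Matrix.continuousOn_spectrum (σ : Matrix m m ℂ) (f : ℝ → ℝ) :
    ContinuousOn f (spectrum ℝ σ) :=
  σ.finite_real_spectrum.continuousOn f

theorem cfc_support_mul_of_range_le {σ X : Matrix m m ℂ} (hσ : IsSelfAdjoint σ)
    (h : LinearMap.range (toLin' X) ≤ LinearMap.range (toLin' σ)) :
    cfc (fun x : ℝ => if x = 0 then 0 else 1) σ * X = X := by
  have hPσ : cfc (fun x : ℝ => if x = 0 then 0 else 1) σ * σ = σ := by
    calc cfc (fun x : ℝ => if x = 0 then 0 else 1) σ * σ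
        = cfc (fun x : ℝ => (if x = 0 then 0 else 1) * x) σ := by
          rw [cfc_mul _ _ σ (σ.continuousOn_spectrum _) (σ.continuousOn_spectrum _), cfc_id' ℝ σ]
      _ = σ := by
          conv_rhs => rw [← cfc_id' ℝ σ]
          exact cfc_congr fun x _ => by split_ifs with hx <;> simp [hx]
  refine toLin'.injective (LinearMap.ext fun v => ?_)
  obtain ⟨u, hu⟩ := h (LinearMap.mem_range_self (toLin' X) v)
  rw [toLin'_mul, LinearMap.comp_apply, ← hu, ← LinearMap.comp_apply, ← toLin'_mul, hPσ]

theorem cfc_mul_mul_cfc_eq_of_range_le {σ X : Matrix m m ℂ} (hσ : IsSelfAdjoint σ)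
    (hX : X.IsHermitian) (h : LinearMap.range (toLin' X) ≤ LinearMap.range (toLin' σ))
    (g : ℝ → ℝ) :
    cfc (fun x => if x = 0 then 0 else g x) σ * X * cfc (fun x => if x = 0 then 0 else g x) σ =
      cfc g σ * X * cfc g σ := by
  set P := cfc (fun x : ℝ => if x = 0 then 0 else 1) σ
  have hPX : P * X = X := cfc_support_mul_of_range_le hσ h
  have hXP : X * P = X := by
    have := congrArg conjTranspose hPX
    rwa [conjTranspose_mul, hX.eq, ← star_eq_conjTranspose,
      (cfc_predicate _ σ : IsSelfAdjoint P).star_eq] at this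
  have hgP : cfc (fun x => if x = 0 then 0 else g x) σ = cfc g σ * P := by
    rw [← cfc_mul _ _ σ (σ.continuousOn_spectrum _) (σ.continuousOn_spectrum _)]
    refine cfc_congr fun x _ => ?_
    split_ifs <;> simp
  have hPg : cfc g σ * P = P * cfc g σ := by
    rw [← cfc_mul _ _ σ (σ.continuousOn_spectrum _) (σ.continuousOn_spectrum _),
      ← cfc_mul _ _ σ (σ.continuousOn_spectrum _) (σ.continuousOn_spectrum _)]
    exact cfc_congr fun x _ => mul_comm _ _
  rw [hgP]
  nth_rewrite 2 [hPg]
  rw [mul_assoc (cfc g σ) P X, hPX, ← mul_assoc, mul_assoc (cfc g σ) X P, hXP]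

theorem nuAlpha_of_range_le {α : ℝ} {X σ : Matrix m m ℂ}
    (h : LinearMap.range (toLin' X) ≤ LinearMap.range (toLin' σ)) :
    nuAlpha α X σ = Real.logb 2 (muAlpha α X σ) :=
  if_pos h

theorem nuAlpha_of_posDef {α : ℝ} {X σ : Matrix m m ℂ} (hσ : σ.PosDef) :
    nuAlpha α X σ = Real.logb 2 (muAlpha α X σ) :=
  nuAlpha_of_range_le <| le_top.trans_eq
    (LinearMap.range_eq_top.2 (mulVec_surjective_iff_isUnit.2 hσ.isUnit)).symm

end MatrixAnalysis

section Depolarize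

variable {m : Type*} [Fintype m] [DecidableEq m]

def depolarize (ε : ℝ) (σ : Matrix m m ℂ) : Matrix m m ℂ :=
  (1 - ε) • σ + (ε / Fintype.card m) • 1

theorem depolarize_eq_cfc {σ : Matrix m m ℂ} (hσ : IsSelfAdjoint σ) (ε : ℝ) :
    depolarize ε σ = cfc (fun x : ℝ => (1 - ε) * x + ε / Fintype.card m) σ := by
  rw [cfc_add _ _ _ (σ.continuousOn_spectrum _) (σ.continuousOn_spectrum _),
    cfc_const_mul _ _ _ (σ.continuousOn_spectrum _), cfc_id' ℝ σ, cfc_const _ σ,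
    Algebra.algebraMap_eq_smul_one, depolarize]

theorem Matrix.PosSemidef.posDef_depolarize [Nonempty m] {σ : Matrix m m ℂ} (hσ : σ.PosSemidef)
    {ε : ℝ} (hε₀ : 0 < ε) (hε₁ : ε ≤ 1) : (depolarize ε σ).PosDef :=
  PosDef.posSemidef_add (hσ.smul (sub_nonneg.2 hε₁)) (PosDef.one.smul (by positivity))

theorem trace_depolarize [Nonempty m] (σ : Matrix m m ℂ) (ε : ℝ) :
    (depolarize ε σ).trace = (1 - ε : ℝ) * σ.trace + ε := by
  have hcard : (Fintype.card m : ℂ) ≠ 0 := Nat.cast_ne_zero.2 Fintype.card_ne_zero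
  simp only [depolarize, trace_add, trace_smul, trace_one, Complex.real_smul]
  push_cast
  field_simp

theorem tendsto_muAlpha_depolarize {σ X : Matrix m m ℂ} (hσ : σ.IsHermitian)
    (hX : X.IsHermitian) (h : LinearMap.range (toLin' X) ≤ LinearMap.range (toLin' σ))
    {α : ℝ} (hα : 0 < α) :
    Tendsto (fun ε => muAlpha α X (depolarize ε σ)) (𝓝 0) (𝓝 (muAlpha α X σ)) := by
  set d : ℝ := (Fintype.card m : ℝ)
  have hmpow (ε t : ℝ) :
      mpow (depolarize ε σ) t = cfc (fun x : ℝ => ((1 - ε) * x + ε / d) ^ t) σ := by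
    rw [depolarize_eq_cfc hσ.isSelfAdjoint, mpow, ← cfc_comp' (fun y : ℝ => y ^ t) _ σ
      ((σ.finite_real_spectrum.image _).continuousOn _) (σ.continuousOn_spectrum _)]
  set t := (1 - α) / (2 * α)
  have hcut :
      Tendsto (fun ε => cfc (fun x : ℝ => if x = 0 then 0 else ((1 - ε) * x + ε / d) ^ t) σ)
      (𝓝 0) (𝓝 (cfc (fun x : ℝ => if x = 0 then 0 else x ^ t) σ)) := by
    refine hσ.tendsto_cfc fun x => ?_
    split_ifs with hx
    · exact tendsto_const_nhds
    · have : ContinuousAt (fun ε : ℝ => ((1 - ε) * x + ε / d) ^ t) 0 :=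
        ContinuousAt.rpow_const (by fun_prop) (Or.inl (by simpa using hx))
      simpa using this.tendsto
  have := ((continuous_schattenNorm hα).tendsto _).comp
    ((hcut.mul (tendsto_const_nhds (x := X))).mul hcut)
  simp only [Function.comp_def, cfc_mul_mul_cfc_eq_of_range_le hσ.isSelfAdjoint hX h] at this
  simp only [muAlpha, hmpow]
  exact this

end Depolarize

section PartialTranspose

variable {a b : Type*}

theorem Matrix.IsHermitian.ptranspose {ρ : Matrix (a × b) (a × b) ℂ} (hρ : ρ.IsHermitian) :
    (ptranspose ρ).IsHermitian := by
  ext x y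
  exact hρ.apply (x.1, y.2) (y.1, x.2)

theorem ptranspose_one [DecidableEq a] [DecidableEq b] :
    ptranspose (1 : Matrix (a × b) (a × b) ℂ) = 1 := by
  ext ⟨x₁, x₂⟩ ⟨y₁, y₂⟩
  simp only [ptranspose, one_apply, Prod.mk.injEq]
  grind

theorem ptranspose_depolarize [Fintype a] [Fintype b] [DecidableEq a] [DecidableEq b] (ε : ℝ)
    (σ : Matrix (a × b) (a × b) ℂ) :
    ptranspose (depolarize ε σ) = depolarize ε (ptranspose σ) := by
  rw [depolarize, depolarize]
  conv_rhs => rw [← ptranspose_one]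
  rfl

end PartialTranspose

section LogNegativity

variable {a b : Type*} [Fintype a] [Fintype b] [DecidableEq a] [DecidableEq b]

theorem IsPPT.depolarize {σ : Matrix (a × b) (a × b) ℂ} (hσ : IsPPT σ) {ε : ℝ}
    (hε₀ : 0 < ε) (hε₁ : ε ≤ 1) :
    (depolarize ε σ).PosDef ∧ (ptranspose (depolarize ε σ)).PosDef ∧
      (depolarize ε σ).trace = 1 := by
  obtain ⟨hσ, hσT, hσtr⟩ := hσ
  have : Nonempty (a × b) := by
    by_contra hempty
    simp [Matrix.trace, not_nonempty_iff.1 hempty] at hσtr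
  refine ⟨hσ.posDef_depolarize hε₀ hε₁, ?_, ?_⟩
  · rw [ptranspose_depolarize]
    exact hσT.posDef_depolarize hε₀ hε₁
  · rw [trace_depolarize, hσtr]
    push_cast
    ring

theorem iInf_faithful_le_nuAlpha {α : ℝ} (hα : 0 < α) {X σ : Matrix (a × b) (a × b) ℂ}
    (hX : X.IsHermitian) (hσ : IsPPT σ) :
    ⨅ τ : {τ : Matrix (a × b) (a × b) ℂ // τ.PosDef ∧ (ptranspose τ).PosDef ∧ τ.trace = 1},
      nuAlpha α X τ.1 ≤ nuAlpha α X σ := by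
  by_cases hsupp : LinearMap.range (toLin' X) ≤ LinearMap.range (toLin' σ)
  swap
  · rw [nuAlpha, if_neg hsupp]
    exact le_top
  rw [nuAlpha_of_range_le hsupp]
  -- `logb 2` is only upper semicontinuous at `μ_α(X‖σ) = 0`, where its junk value is `0`.
  refine EReal.le_of_forall_lt_iff_le.1 fun c hc => ?_
  have hlt : ∀ᶠ ε in 𝓝 0, Real.logb 2 (muAlpha α X (depolarize ε σ)) < c :=
    (tendsto_muAlpha_depolarize hσ.1.1 hX hsupp hα).eventually
      (Real.upperSemicontinuous_logb one_lt_two _ c (EReal.coe_lt_coe_iff.1 hc))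
  obtain ⟨ε, hεc, hε⟩ :=
    ((hlt.filter_mono nhdsWithin_le_nhds).and (Ioo_mem_nhdsGT one_pos)).exists
  have hfaithful := hσ.depolarize hε.1 hε.2.le
  calc _ ≤ nuAlpha α X (depolarize ε σ) := iInf_le_of_le ⟨_, hfaithful⟩ le_rfl
    _ = Real.logb 2 (muAlpha α X (depolarize ε σ)) := nuAlpha_of_posDef hfaithful.1
    _ ≤ c := EReal.coe_le_coe_iff.2 hεc.le

end LogNegativity

theorem ENalpha_eq_iInf_faithful_general {a b : Type*}
    [Fintype a] [Fintype b] [DecidableEq a] [DecidableEq b]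
    (ρ : Matrix (a × b) (a × b) ℂ) (hρ : ρ.PosSemidef)
    (α : ℝ) (hα : 1 ≤ α) :
    ENalpha α ρ =
      ⨅ σ : {σ : Matrix (a × b) (a × b) ℂ //
          σ.PosDef ∧ (ptranspose σ).PosDef ∧ σ.trace = 1},
        nuAlpha α (ptranspose ρ) σ.1 := by
  refine le_antisymm (le_iInf fun σ => ?_) (le_iInf fun σ => ?_)
  · exact iInf_le_of_le ⟨σ.1, σ.2.1.posSemidef, σ.2.2.1.posSemidef, σ.2.2.2⟩ le_rfl
  · exact iInf_faithful_le_nuAlpha (by linarith) hρ.1.ptranspose σ.2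

/-- the infimum over PPT states equals the infimum over faithful PPT states. -/
theorem ENalpha_eq_iInf_faithful {a b : Type*}
    [Fintype a] [Fintype b] [DecidableEq a] [DecidableEq b]
    (ρ : Matrix (a × b) (a × b) ℂ) (hρ : ρ.PosSemidef) (hρtr : ρ.trace = 1)
    (α : ℝ) (hα : 1 ≤ α) :
    ENalpha α ρ =
      ⨅ σ : {σ : Matrix (a × b) (a × b) ℂ //
          σ.PosDef ∧ (ptranspose σ).PosDef ∧ σ.trace = 1},
        nuAlpha α (ptranspose ρ) σ.1 :=
  ENalpha_eq_iInf_faithful_general ρ hρ α hα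
end
end

section
/- For a maximally entangled state Φ^d of Schmidt rank d ≥ 2, the α-logarithmic negativity equals log₂ d for every α ≥ 1: E_N^α(Φ^d_AB) = log₂ d. -/
open scoped Classical
open Matrix ComplexOrder

noncomputable section

variable {n : Type*} [Fintype n] [DecidableEq n]

/-! The partial transpose of `Φ^d` is `F / d` with `F` the swap unitary, so `X = T_B(Φ^d)`
satisfies `Xᴴ X = d⁻² · 1` on a space of dimension `N = d²`. The maximally mixed state
`σ = 1 / N` is PPT and gives `μ_α(X‖σ) = N · d⁻¹ = d`. Conversely let `σ` be any state with
`ν_α(X‖σ) < ⊤`; since `X` is invertible, `σ` has full rank. With `c = (1 - α) / (2α) ≤ 0`,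
AM–GM on the eigenvalues of `(σ^c X σ^c)ᴴ (σ^c X σ^c)` gives
`μ_α(X‖σ) ≥ N^{1/α} (det σ)^{2c/N} |det X|^{1/N}`, and AM–GM on the eigenvalues of `σ` gives
`(det σ)^{1/N} ≤ 1/N`. As `2c ≤ 0`, these combine to `μ_α(X‖σ) ≥ N |det X|^{1/N} = d`. -/

theorem Real.prod_rpow_inv_card_le_sum_div_card {ι : Type*} [Fintype ι] [Nonempty ι]
    (z : ι → ℝ) (hz : ∀ i, 0 ≤ z i) :
    (∏ i, z i) ^ (Fintype.card ι : ℝ)⁻¹ ≤ (∑ i, z i) / Fintype.card ι := by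
  simpa using Real.geom_mean_le_arith_mean Finset.univ (fun _ => 1) z (fun _ _ => zero_le_one)
    (by simpa using Fintype.card_pos) (fun i _ => hz i)

theorem algebraMap_mul_mul_algebraMap {R A : Type*} [CommSemiring R] [Semiring A] [Algebra R A]
    (q : R) (x : A) : algebraMap R A q * x * algebraMap R A q = (q * q) • x := by
  rw [mul_assoc, ← Algebra.commutes, ← mul_assoc, ← map_mul, ← Algebra.smul_def]

namespace Matrix

theorem IsHermitian.trace_cfc_s17 {A : Matrix n n ℂ} (hA : A.IsHermitian) (f : ℝ → ℝ) :
    (cfc f A).trace = ∑ i, (f (hA.eigenvalues i) : ℂ) := by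
  rw [hA.cfc_eq, IsHermitian.cfc, Unitary.conjStarAlgAut_apply, trace_mul_cycle,
    Unitary.star_mul_self_of_mem (SetLike.coe_mem _), one_mul, trace_diagonal]
  rfl

theorem IsHermitian.det_cfc {A : Matrix n n ℂ} (hA : A.IsHermitian) (f : ℝ → ℝ) :
    (cfc f A).det = ∏ i, (f (hA.eigenvalues i) : ℂ) := by
  rw [hA.cfc_eq, IsHermitian.cfc, Unitary.conjStarAlgAut_apply, det_mul, det_mul, mul_comm,
    ← mul_assoc, ← det_mul, Unitary.star_mul_self_of_mem (SetLike.coe_mem _), det_one, one_mul,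
    det_diagonal]
  rfl

theorem PosSemidef.norm_det_eq_prod_eigenvalues {A : Matrix n n ℂ} (hA : A.PosSemidef) :
    ‖A.det‖ = ∏ i, hA.1.eigenvalues i := by
  simp [hA.1.det_eq_prod_eigenvalues, norm_prod, abs_of_nonneg (hA.eigenvalues_nonneg _)]

theorem PosSemidef.norm_det_rpow_inv_card_le [Nonempty n] {σ : Matrix n n ℂ}
    (hσ : σ.PosSemidef) (htr : σ.trace = 1) :
    ‖σ.det‖ ^ (Fintype.card n : ℝ)⁻¹ ≤ (Fintype.card n : ℝ)⁻¹ := by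
  have hsum : ∑ i, hσ.1.eigenvalues i = 1 := by
    simpa using congrArg Complex.re (hσ.1.trace_eq_sum_eigenvalues.symm.trans htr)
  simpa [hσ.norm_det_eq_prod_eigenvalues, hsum] using
    Real.prod_rpow_inv_card_le_sum_div_card _ hσ.eigenvalues_nonneg

theorem prod_eigenvalues_conjTranspose_mul_self (Y : Matrix n n ℂ) :
    ∏ i, (isHermitian_conjTranspose_mul_self Y).eigenvalues i = ‖Y.det‖ ^ 2 := by
  rw [← (posSemidef_conjTranspose_mul_self Y).norm_det_eq_prod_eigenvalues, det_mul,
    det_conjTranspose, norm_mul, norm_star, sq]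

theorem norm_det_rpow_inv_card_eq_sqrt [Nonempty n] {s : ℝ} (hs : 0 ≤ s) {X : Matrix n n ℂ}
    (hX : Xᴴ * X = algebraMap ℝ (Matrix n n ℂ) s) :
    ‖X.det‖ ^ (Fintype.card n : ℝ)⁻¹ = √s := by
  have hsq : ‖X.det‖ ^ 2 = (√s ^ Fintype.card n) ^ 2 := by
    have hdet : ‖(Xᴴ * X).det‖ = ‖X.det‖ ^ 2 := by
      rw [det_mul, det_conjTranspose, norm_mul, norm_star, sq]
    rw [← pow_mul, mul_comm, pow_mul, Real.sq_sqrt hs, ← hdet, hX, algebraMap_eq_diagonal,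
      det_diagonal]
    simp [abs_of_nonneg hs]
  rw [pow_left_inj₀ (norm_nonneg _) (by positivity) two_ne_zero] at hsq
  rw [hsq, Real.pow_rpow_inv_natCast (Real.sqrt_nonneg s) Fintype.card_ne_zero]

theorem trace_algebraMap_real (r : ℝ) :
    (algebraMap ℝ (Matrix n n ℂ) r).trace = (Fintype.card n * r : ℝ) := by
  simp [algebraMap_eq_diagonal, trace_diagonal]

theorem range_toLin'_eq_top_iff {m R : Type*} [Fintype m] [DecidableEq m] [CommRing R]
    {A : Matrix m m R} : LinearMap.range (toLin' A) = ⊤ ↔ IsUnit A := by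
  rw [LinearMap.range_eq_top, toLin'_apply']
  exact mulVec_surjective_iff_isUnit

theorem conjTranspose_smul_permMatrix_mul_self (c : ℂ) (σ : Equiv.Perm n) :
    (c • σ.permMatrix ℂ)ᴴ * (c • σ.permMatrix ℂ) = algebraMap ℝ (Matrix n n ℂ) (‖c‖ ^ 2) := by
  rw [conjTranspose_smul, conjTranspose_permMatrix, smul_mul_smul, ← permMatrix_mul,
    mul_inv_cancel, permMatrix_one, Complex.star_def, Complex.conj_mul',
    Algebra.algebraMap_eq_smul_one, ← Complex.ofReal_pow, Complex.coe_smul]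

end Matrix

theorem mpow_algebraMap (r s : ℝ) :
    mpow (algebraMap ℝ (Matrix n n ℂ) r) s = algebraMap ℝ (Matrix n n ℂ) (r ^ s) :=
  cfc_algebraMap r _

theorem norm_det_mpow {σ : Matrix n n ℂ} (hσ : σ.PosSemidef) (r : ℝ) :
    ‖(mpow σ r).det‖ = ‖σ.det‖ ^ r := by
  rw [mpow, hσ.1.det_cfc, ← Complex.ofReal_prod, Complex.norm_real, Real.norm_eq_abs,
    hσ.norm_det_eq_prod_eigenvalues, ← Real.finsetProd_rpow _ _ fun i _ => hσ.eigenvalues_nonneg i,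
    abs_of_nonneg (Finset.prod_nonneg fun i _ => Real.rpow_nonneg (hσ.eigenvalues_nonneg i) r)]

theorem schattenNorm_eq_sum_eigenvalues (p : ℝ) (Y : Matrix n n ℂ) :
    schattenNorm p Y =
      (∑ i, (isHermitian_conjTranspose_mul_self Y).eigenvalues i ^ (p / 2)) ^ (1 / p) := by
  rw [schattenNorm, mpow, IsHermitian.trace_cfc_s17, ← Complex.ofReal_sum, Complex.ofReal_re]

theorem schattenNorm_of_conjTranspose_mul_self_eq_algebraMap {Y : Matrix n n ℂ} {s : ℝ}
    (h : Yᴴ * Y = algebraMap ℝ (Matrix n n ℂ) s) (p : ℝ) :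
    schattenNorm p Y = (Fintype.card n * s ^ (p / 2)) ^ (1 / p) := by
  rw [schattenNorm, h, mpow_algebraMap, trace_algebraMap_real, Complex.ofReal_re]

theorem card_rpow_mul_norm_det_rpow_le_schattenNorm [Nonempty n] {p : ℝ} (hp : 0 < p)
    (Y : Matrix n n ℂ) :
    (Fintype.card n : ℝ) ^ (1 / p) * ‖Y.det‖ ^ (Fintype.card n : ℝ)⁻¹ ≤ schattenNorm p Y := by
  set N : ℝ := (Fintype.card n : ℝ)
  set μ := (isHermitian_conjTranspose_mul_self Y).eigenvalues
  have hN : 0 < N := by simpa [N] using Fintype.card_pos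
  have hμ : ∀ i, 0 ≤ μ i := (posSemidef_conjTranspose_mul_self Y).eigenvalues_nonneg
  have hprod : ∏ i, μ i ^ (p / 2) = ‖Y.det‖ ^ p := by
    rw [Real.finsetProd_rpow _ _ fun i _ => hμ i, prod_eigenvalues_conjTranspose_mul_self,
      ← Real.rpow_natCast, ← Real.rpow_mul (norm_nonneg _)]
    ring_nf
  have hamgm : N * (‖Y.det‖ ^ p) ^ N⁻¹ ≤ ∑ i, μ i ^ (p / 2) := by
    have := Real.prod_rpow_inv_card_le_sum_div_card _ fun i => Real.rpow_nonneg (hμ i) (p / 2)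
    rwa [hprod, le_div_iff₀ hN, mul_comm] at this
  rw [schattenNorm_eq_sum_eigenvalues]
  calc N ^ (1 / p) * ‖Y.det‖ ^ N⁻¹ = (N * (‖Y.det‖ ^ p) ^ N⁻¹) ^ (1 / p) := by
        rw [Real.mul_rpow hN.le (by positivity), ← Real.rpow_mul (by positivity),
          ← Real.rpow_mul (norm_nonneg _)]
        congr 2
        field_simp
    _ ≤ (∑ i, μ i ^ (p / 2)) ^ (1 / p) := by gcongr

theorem card_mul_norm_det_rpow_le_muAlpha [Nonempty n] {α : ℝ} (hα : 1 ≤ α)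
    {σ : Matrix n n ℂ} (hσ : σ.PosDef) (htr : σ.trace = 1) (X : Matrix n n ℂ) :
    Fintype.card n * ‖X.det‖ ^ (Fintype.card n : ℝ)⁻¹ ≤ muAlpha α X σ := by
  set N : ℝ := (Fintype.card n : ℝ)
  set c := (1 - α) / (2 * α)
  set g := ‖σ.det‖ ^ N⁻¹
  have hN : 0 < N := by simpa [N] using Fintype.card_pos
  have hg : 0 < g := Real.rpow_pos_of_pos (norm_pos_iff.2 hσ.det_pos.ne') _
  have hα0 : 0 < α := by linarith
  have hc : 2 * c = -((α - 1) / α) := by simp only [c]; field_simp; ring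
  have hdet : ‖(mpow σ c * X * mpow σ c).det‖ ^ N⁻¹ = g ^ (2 * c) * ‖X.det‖ ^ N⁻¹ := by
    rw [det_mul, det_mul, norm_mul, norm_mul, norm_det_mpow hσ.posSemidef,
      Real.mul_rpow (by positivity) (by positivity), Real.mul_rpow (by positivity) (by positivity),
      ← Real.rpow_mul (norm_nonneg _), mul_comm c, Real.rpow_mul (norm_nonneg _), two_mul,
      Real.rpow_add hg]
    simp only [g]
    ring
  calc N * ‖X.det‖ ^ N⁻¹ = N ^ (1 / α) * N⁻¹ ^ (2 * c) * ‖X.det‖ ^ N⁻¹ := by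
        rw [Real.inv_rpow hN.le, hc, Real.rpow_neg hN.le, inv_inv, ← Real.rpow_add hN]
        field_simp
        rw [add_sub_cancel, div_self hα0.ne', Real.rpow_one, mul_comm]
    _ ≤ N ^ (1 / α) * g ^ (2 * c) * ‖X.det‖ ^ N⁻¹ := by
        gcongr N ^ (1 / α) * ?_ * _
        exact Real.rpow_le_rpow_of_nonpos hg (hσ.posSemidef.norm_det_rpow_inv_card_le htr)
          (show 2 * c ≤ 0 by rw [hc, neg_nonpos]; exact div_nonneg (by linarith) hα0.le)
    _ = N ^ (1 / α) * ‖(mpow σ c * X * mpow σ c).det‖ ^ N⁻¹ := by rw [hdet, mul_assoc]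
    _ ≤ muAlpha α X σ := card_rpow_mul_norm_det_rpow_le_schattenNorm (by linarith) _

theorem muAlpha_algebraMap_inv_card [Nonempty n] {α s : ℝ} (hα : 0 < α) (hs : 0 ≤ s)
    {X : Matrix n n ℂ} (hX : Xᴴ * X = algebraMap ℝ (Matrix n n ℂ) s) :
    muAlpha α X (algebraMap ℝ (Matrix n n ℂ) (Fintype.card n : ℝ)⁻¹) =
      Fintype.card n * √s := by
  set N : ℝ := (Fintype.card n : ℝ)
  set q := N⁻¹ ^ ((1 - α) / (2 * α))
  have hN : 0 < N := by simpa [N] using Fintype.card_pos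
  have hY : ((q * q) • X)ᴴ * ((q * q) • X) = algebraMap ℝ (Matrix n n ℂ) ((q * q) ^ 2 * s) := by
    rw [conjTranspose_smul, star_trivial, smul_mul_smul, hX, map_mul, ← Algebra.smul_def, sq]
  have hq : ((q * q) ^ 2) ^ (α / 2) = N ^ (α - 1) := by
    rw [show (q * q) ^ 2 = q ^ (4 : ℕ) by ring, ← Real.rpow_natCast,
      ← Real.rpow_mul (inv_nonneg.2 hN.le), ← Real.rpow_mul (inv_nonneg.2 hN.le),
      Real.inv_rpow hN.le, ← Real.rpow_neg hN.le]
    congr 1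
    field_simp
    ring
  rw [muAlpha, mpow_algebraMap, algebraMap_mul_mul_algebraMap,
    schattenNorm_of_conjTranspose_mul_self_eq_algebraMap hY, Real.mul_rpow (by positivity) hs, hq,
    ← mul_assoc, ← Real.rpow_one_add' hN.le (by linarith), add_sub_cancel, Real.sqrt_eq_rpow,
    Real.mul_rpow (by positivity) (by positivity), ← Real.rpow_mul hN.le, ← Real.rpow_mul hs,
    mul_one_div_cancel hα.ne', Real.rpow_one]
  congr 2
  field_simp

theorem ptranspose_algebraMap {a b : Type*} [Fintype a] [Fintype b] [DecidableEq a]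
    [DecidableEq b] (r : ℝ) :
    ptranspose (algebraMap ℝ (Matrix (a × b) (a × b) ℂ) r) = algebraMap ℝ _ r := by
  ext x y
  simp only [ptranspose, algebraMap_eq_diagonal, diagonal_apply, Prod.ext_iff, Pi.algebraMap_apply]
  simp only [eq_comm]

theorem isPPT_algebraMap_inv_card {a b : Type*} [Fintype a] [Fintype b] [DecidableEq a]
    [DecidableEq b] [Nonempty a] [Nonempty b] :
    IsPPT (algebraMap ℝ (Matrix (a × b) (a × b) ℂ) (Fintype.card (a × b) : ℝ)⁻¹) := by
  have hpsd :
      (algebraMap ℝ (Matrix (a × b) (a × b) ℂ) (Fintype.card (a × b) : ℝ)⁻¹).PosSemidef := by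
    rw [algebraMap_eq_diagonal]
    exact PosSemidef.diagonal fun _ => by simp [Pi.algebraMap_apply]; positivity
  refine ⟨hpsd, by rwa [ptranspose_algebraMap], ?_⟩
  rw [trace_algebraMap_real, mul_inv_cancel₀ (by positivity), Complex.ofReal_one]

theorem ENalpha_eq_logb_of_conjTranspose_mul_self_ptranspose {a b : Type*} [Fintype a]
    [Fintype b] [DecidableEq a] [DecidableEq b] [Nonempty a] [Nonempty b] {α s : ℝ} (hα : 1 ≤ α)
    (hs : 0 < s) {ρ : Matrix (a × b) (a × b) ℂ}
    (hρ : (ptranspose ρ)ᴴ * ptranspose ρ = algebraMap ℝ _ s) :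
    ENalpha α ρ = ((Real.logb 2 (Fintype.card (a × b) * √s) : ℝ) : EReal) := by
  have hunit : IsUnit (ptranspose ρ) := by
    have h : IsUnit ((ptranspose ρ)ᴴ * ptranspose ρ) :=
      hρ ▸ (isUnit_iff_ne_zero.2 hs.ne').map (algebraMap ℝ _)
    rw [isUnit_iff_isUnit_det, det_mul] at h
    exact (isUnit_iff_isUnit_det _).2 (isUnit_of_mul_isUnit_right h)
  apply le_antisymm
  · have hσ₀ : IsUnit (algebraMap ℝ (Matrix (a × b) (a × b) ℂ) (Fintype.card (a × b) : ℝ)⁻¹) :=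
      (isUnit_iff_ne_zero.2 (by positivity)).map _
    refine iInf_le_of_le ⟨_, isPPT_algebraMap_inv_card⟩ ?_
    rw [nuAlpha, if_pos (range_toLin'_eq_top_iff.2 hσ₀ ▸ le_top),
      muAlpha_algebraMap_inv_card (by linarith) hs.le hρ]
  · refine le_iInf fun σ => ?_
    rw [nuAlpha]
    split_ifs with hrange
    · have hσ : σ.1.PosDef := σ.2.1.posDef_iff_isUnit.2 <| range_toLin'_eq_top_iff.1 <|
        top_le_iff.1 (range_toLin'_eq_top_iff.2 hunit ▸ hrange)
      have hle := card_mul_norm_det_rpow_le_muAlpha hα hσ σ.2.2.2 (ptranspose ρ)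
      rw [norm_det_rpow_inv_card_eq_sqrt hs.le hρ] at hle
      exact EReal.coe_le_coe_iff.2 (Real.logb_le_logb_of_le one_lt_two (by positivity) hle)
    · exact le_top

theorem ptranspose_maximallyEntangled {a : Type*} [DecidableEq a] (c : ℂ) :
    ptranspose (fun x y : a × a => if x.1 = x.2 ∧ y.1 = y.2 then c else 0) =
      c • Equiv.Perm.permMatrix ℂ (Equiv.prodComm a a) := by
  ext x y
  simp [ptranspose, PEquiv.toMatrix_apply, Prod.ext_iff, eq_comm, and_comm]

/-- `E_N^α(Φ^d) = log₂ d` for the maximally entangled state of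
Schmidt rank `d ≥ 2`. -/
theorem ENalpha_maximallyEntangled {d : ℕ} (hd : 2 ≤ d) (α : ℝ) (hα : 1 ≤ α)
    (Φ : Matrix (Fin d × Fin d) (Fin d × Fin d) ℂ)
    (hΦ : Φ = fun r c => if r.1 = r.2 ∧ c.1 = c.2 then (1 / d : ℂ) else 0) :
    ENalpha α Φ = ((Real.logb 2 d : ℝ) : EReal) := by
  have : Nonempty (Fin d) := ⟨⟨0, by omega⟩⟩
  have hd0 : (1 / d : ℂ) ≠ 0 := by simp; omega
  have hX : (ptranspose Φ)ᴴ * ptranspose Φ = algebraMap ℝ _ (‖(1 / d : ℂ)‖ ^ 2) := by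
    rw [hΦ, ptranspose_maximallyEntangled, conjTranspose_smul_permMatrix_mul_self]
  rw [ENalpha_eq_logb_of_conjTranspose_mul_self_ptranspose hα (by positivity) hX,
    Real.sqrt_sq (norm_nonneg _)]
  congr 2
  simp
end
end
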